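/- arXiv:2012.14296 — 3 statements merged into one kernel-verified Lean document; each statement's English description precedes it below -/
import Mathlib

section
/- Let G be a symmetric 3×3 real matrix with zero diagonal, G = [[0,ga,gb],[ga,0,gc],[gb,gc,0]]. If there exists a vector x* with all entries strictly positive such that Gx* = 0, then ga = 0 or gb = 0 or gc = 0. -/
/-! Pairing the equations `G x = 0` with `x` through the signs `(+, +, -)` cancels the
`gb` and `gc` terms and leaves `2 ga x₀ x₁ = 0`, so `ga = 0` once `x₀, x₁ ≠ 0`. -/

theorem Matrix.two_mul_mul_mul_eq_zero_of_mulVec_eq_zero {R : Type*} [CommRing R]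
    (a b c : R) (x : Fin 3 → R) (h : (!![0, a, b; a, 0, c; b, c, 0]).mulVec x = 0) :
    2 * a * x 0 * x 1 = 0 := by
  have row₀ : a * x 1 + b * x 2 = 0 := by simpa [Matrix.mulVec, dotProduct, Fin.sum_univ_three] using congrFun h 0
  have row₁ : a * x 0 + c * x 2 = 0 := by simpa [Matrix.mulVec, dotProduct, Fin.sum_univ_three] using congrFun h 1
  have row₂ : b * x 0 + c * x 1 = 0 := by simpa [Matrix.mulVec, dotProduct, Fin.sum_univ_three] using congrFun h 2
  linear_combination x 0 * row₀ + x 1 * row₁ - x 2 * row₂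

theorem three_player_symm_edge_zero (ga gb gc : ℝ) (x : Fin 3 → ℝ)
    (hx : ∀ i, 0 < x i)
    (h : (!![0, ga, gb; ga, 0, gc; gb, gc, 0]).mulVec x = 0) :
    ga = 0 ∨ gb = 0 ∨ gc = 0 := by
  have key := Matrix.two_mul_mul_mul_eq_zero_of_mulVec_eq_zero ga gb gc x h
  left
  simpa [(hx 0).ne', (hx 1).ne'] using key
end

section
/- There exists a symmetric 4×4 real matrix G with zero diagonal and all off-diagonal entries nonzero, and a vector x* with strictly positive entries, such that Gx* = 0. -/
/-!
Take the complete graph on an even number `c ≥ 4` of players with unit weights, and reweight the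
edges of a perfect matching `σ` (a fixed-point-free involution) by `2 - c`.  Every row then holds
`c - 2` entries `1` and one entry `2 - c`, so all row sums vanish and the all-ones profile lies in
the kernel, while every off-diagonal weight stays nonzero.  For four players take `σ i = i + 2`.
-/

open Matrix Equiv

namespace Matrix

variable {n : Type*} [Fintype n] [DecidableEq n]

noncomputable def matchingReweighted (σ : Perm n) : Matrix n n ℝ :=
  of (fun _ _ => 1) - 1 - ((Fintype.card n : ℝ) - 1) • σ.permMatrix ℝ

lemma matchingReweighted_apply (σ : Perm n) (i j : n) :
    matchingReweighted σ i j =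
      1 - (if i = j then 1 else 0) - ((Fintype.card n : ℝ) - 1) * (if σ i = j then 1 else 0) := by
  simp [matchingReweighted, one_apply, PEquiv.toMatrix_apply]

lemma matchingReweighted_isSymm {σ : Perm n} (hσ : Function.Involutive σ) :
    (matchingReweighted σ).IsSymm := by
  refine IsSymm.ext fun i j => ?_
  have hswap : σ j = i ↔ σ i = j := by rw [hσ.eq_iff, eq_comm]
  simp only [matchingReweighted_apply, hswap, @eq_comm _ j i]

lemma matchingReweighted_diag {σ : Perm n} (hσ : ∀ i, σ i ≠ i) (i : n) :
    matchingReweighted σ i i = 0 := by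
  simp [matchingReweighted_apply, hσ i]

lemma matchingReweighted_ne_zero (σ : Perm n) (hcard : Fintype.card n ≠ 2) {i j : n}
    (hij : i ≠ j) : matchingReweighted σ i j ≠ 0 := by
  have hc : (Fintype.card n : ℝ) ≠ 2 := by exact_mod_cast hcard
  rw [matchingReweighted_apply, if_neg hij]
  split_ifs <;> [(intro h; apply hc; linarith); norm_num]

lemma matchingReweighted_mulVec_one (σ : Perm n) : matchingReweighted σ *ᵥ 1 = 0 := by
  have hJ : of (fun _ _ => (1 : ℝ)) *ᵥ (1 : n → ℝ) = fun _ : n => (Fintype.card n : ℝ) := by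
    ext i; simp [mulVec, dotProduct]
  ext i
  simp [matchingReweighted, sub_mulVec, smul_mulVec, permMatrix_mulVec, hJ]

end Matrix

theorem four_player_exists :
    ∃ (G : Matrix (Fin 4) (Fin 4) ℝ) (x : Fin 4 → ℝ),
      G.IsSymm ∧ (∀ i, G i i = 0) ∧ (∀ i j, i ≠ j → G i j ≠ 0) ∧
      (∀ i, 0 < x i) ∧ G.mulVec x = 0 := by
  let σ : Perm (Fin 4) := Equiv.addRight 2
  have hσ : Function.Involutive σ := by unfold Function.Involutive; decide
  have hfree : ∀ i, σ i ≠ i := by decide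
  exact ⟨matchingReweighted σ, 1, matchingReweighted_isSymm hσ, matchingReweighted_diag hfree,
    fun _ _ => matchingReweighted_ne_zero σ (by simp), fun _ => one_pos,
    matchingReweighted_mulVec_one σ⟩
end

section
/- Let M and Γ be real N×N Z-matrices (all off-diagonal entries nonpositive) with equal diagonals, such that Γ_ij ≥ M_ij entrywise. If M is a P-matrix, then Γ is a P-matrix. -/
/-!
Expanding the determinant around the last diagonal entry `p = B l l` gives
`det B = p * det S`, where `S i j = B i j - B i l * B l j / p` is the Schur complement. The Schur
complement of a P-matrix is again a P-matrix, since its principal minors are ratios of principal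
minors of `B`. If `B` is a Z-matrix dominating `A` entrywise and `A l l > 0`, then the Schur
complement of `B` is a Z-matrix dominating that of `A`, because `0 ≤ B i l * B l j ≤ A i l * A l j`
and `A l l ≤ B l l`. Induction on the size gives `det B > 0`, and the same argument applies to every
principal submatrix.
-/

open Function

namespace Matrix

variable {K : Type*} {m n : Type*}

def IsZMatrix [Zero K] [LE K] (A : Matrix n n K) : Prop :=
  ∀ i j, i ≠ j → A i j ≤ 0

def IsPMatrix [CommRing K] [LT K] (A : Matrix n n K) : Prop :=
  ∀ (k : ℕ) (f : Fin k → n), Injective f → 0 < (A.submatrix f f).det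

theorem IsZMatrix.submatrix [Zero K] [LE K] {A : Matrix n n K} (hA : A.IsZMatrix) {f : m → n}
    (hf : Injective f) : (A.submatrix f f).IsZMatrix :=
  fun _ _ hij => hA _ _ (hf.ne hij)

section PMatrix

variable [CommRing K] [LT K]

theorem IsPMatrix.submatrix {A : Matrix n n K} (hA : A.IsPMatrix) {f : m → n}
    (hf : Injective f) : (A.submatrix f f).IsPMatrix := by
  intro k g hg
  rw [submatrix_submatrix]
  exact hA k (f ∘ g) (hf.comp hg)

theorem IsPMatrix.diag_pos {A : Matrix n n K} (hA : A.IsPMatrix) (i : n) : 0 < A i i := by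
  simpa using hA 1 (fun _ => i) (injective_of_subsingleton _)

end PMatrix

section Schur

variable [Field K] {N : ℕ}

noncomputable def schurLast (B : Matrix (Fin (N + 1)) (Fin (N + 1)) K) :
    Matrix (Fin N) (Fin N) K :=
  of fun i j => B i.castSucc j.castSucc -
    B i.castSucc (Fin.last N) * B (Fin.last N) j.castSucc / B (Fin.last N) (Fin.last N)

theorem det_eq_mul_det_schurLast (B : Matrix (Fin (N + 1)) (Fin (N + 1)) K)
    (h : B (Fin.last N) (Fin.last N) ≠ 0) :
    B.det = B (Fin.last N) (Fin.last N) * B.schurLast.det := by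
  rw [← det_reindex_self finSumFinEquiv.symm B]
  set B' := B.reindex finSumFinEquiv.symm finSumFinEquiv.symm
  have hunit : IsUnit B'.toBlocks₂₂.det := by
    rw [det_fin_one]
    exact h.isUnit
  let := B'.toBlocks₂₂.invertibleOfIsUnitDet hunit
  rw [← fromBlocks_toBlocks B', det_fromBlocks₂₂, invOf_eq_nonsing_inv, inv_def,
    adjugate_fin_one, det_fin_one]
  congr 2
  ext i j
  simp only [B', toBlocks₁₁, toBlocks₁₂, toBlocks₂₁, toBlocks₂₂, reindex_apply, Equiv.symm_symm,
    submatrix_apply, finSumFinEquiv_apply_left, finSumFinEquiv_apply_right, of_apply,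
    Ring.inverse_eq_inv', Matrix.mul_smul, Matrix.mul_one, smul_of, sub_apply, mul_apply,
    Finset.univ_unique, Fin.default_eq_zero, Pi.smul_apply, smul_eq_mul, Finset.sum_singleton,
    schurLast]
  have hlast : (Fin.natAdd N 0 : Fin (N + 1)) = Fin.last N := rfl
  rw [hlast]
  change B i.castSucc j.castSucc - _ * B i.castSucc _ * B _ j.castSucc = _
  ring

theorem submatrix_schurLast {k : ℕ} (B : Matrix (Fin (N + 1)) (Fin (N + 1)) K)
    (f : Fin k → Fin N) :
    B.schurLast.submatrix f f =
      (B.submatrix (Fin.snoc (Fin.castSucc ∘ f) (Fin.last N))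
        (Fin.snoc (Fin.castSucc ∘ f) (Fin.last N))).schurLast := by
  ext i j
  simp [schurLast]

end Schur

section Order

variable [Field K] [LinearOrder K] [IsStrictOrderedRing K] {N : ℕ}

theorem IsPMatrix.schurLast {B : Matrix (Fin (N + 1)) (Fin (N + 1)) K} (hB : B.IsPMatrix) :
    B.schurLast.IsPMatrix := by
  intro k f hf
  set g : Fin (k + 1) → Fin (N + 1) := Fin.snoc (Fin.castSucc ∘ f) (Fin.last N)
  have hg : Injective g := Fin.snoc_injective_of_injective
    ((Fin.castSucc_injective N).comp hf) (by simp [Fin.castSucc_ne_last])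
  have hpivot : 0 < B (Fin.last N) (Fin.last N) := hB.diag_pos _
  have hminor := hB _ g hg
  rw [det_eq_mul_det_schurLast _ (by simpa [g] using hpivot.ne')] at hminor
  simp only [submatrix_apply, g, Fin.snoc_last] at hminor
  rw [submatrix_schurLast]
  exact pos_of_mul_pos_right hminor hpivot.le

theorem IsZMatrix.schurLast {B : Matrix (Fin (N + 1)) (Fin (N + 1)) K} (hB : B.IsZMatrix)
    (hpivot : 0 ≤ B (Fin.last N) (Fin.last N)) : B.schurLast.IsZMatrix := by
  intro i j hij
  have hil := hB i.castSucc _ (Fin.castSucc_ne_last i)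
  have hlj := hB _ j.castSucc (Fin.castSucc_ne_last j).symm
  have hcorr := div_nonneg (mul_nonneg_of_nonpos_of_nonpos hil hlj) hpivot
  simp only [Matrix.schurLast, of_apply]
  linarith [hB _ _ ((Fin.castSucc_injective N).ne hij)]

theorem schurLast_le_schurLast {A B : Matrix (Fin (N + 1)) (Fin (N + 1)) K} (hB : B.IsZMatrix)
    (hAB : ∀ i j, A i j ≤ B i j) (hpivot : 0 < A (Fin.last N) (Fin.last N)) (i j : Fin N) :
    A.schurLast i j ≤ B.schurLast i j := by
  have hil := hB i.castSucc _ (Fin.castSucc_ne_last i)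
  have hlj := hB _ j.castSucc (Fin.castSucc_ne_last j).symm
  have hprod : B i.castSucc (Fin.last N) * B (Fin.last N) j.castSucc ≤
      A i.castSucc (Fin.last N) * A (Fin.last N) j.castSucc :=
    mul_le_mul_of_nonpos_of_nonpos (hAB _ _) (hAB _ _) ((hAB _ _).trans hil) hlj
  have hcorr := div_le_div₀ ((mul_nonneg_of_nonpos_of_nonpos hil hlj).trans hprod) hprod hpivot
    (hAB _ _)
  simp only [Matrix.schurLast, of_apply]
  linarith [hAB i.castSucc j.castSucc]

theorem det_pos_of_isPMatrix_of_le :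
    ∀ {N : ℕ} {A B : Matrix (Fin N) (Fin N) K}, A.IsPMatrix → B.IsZMatrix →
      (∀ i j, A i j ≤ B i j) → 0 < B.det
  | 0, _, _, _, _, _ => by simp
  | N + 1, A, B, hA, hB, hAB => by
    have hApivot := hA.diag_pos (Fin.last N)
    have hBpivot := hApivot.trans_le (hAB _ _)
    rw [det_eq_mul_det_schurLast B hBpivot.ne']
    exact mul_pos hBpivot <| det_pos_of_isPMatrix_of_le hA.schurLast
      (hB.schurLast hBpivot.le) (schurLast_le_schurLast hB hAB hApivot)

theorem IsPMatrix.of_le {A B : Matrix n n K} (hA : A.IsPMatrix) (hB : B.IsZMatrix)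
    (hAB : ∀ i j, A i j ≤ B i j) : B.IsPMatrix :=
  fun _ _ hf =>
    det_pos_of_isPMatrix_of_le (hA.submatrix hf) (hB.submatrix hf) fun _ _ => hAB _ _

end Order

end Matrix

theorem P_matrix_of_Z_matrix_comparison_general {N : ℕ} (M Γ : Matrix (Fin N) (Fin N) ℝ)
    (hΓZ : ∀ i j, i ≠ j → Γ i j ≤ 0)
    (hle : ∀ i j, M i j ≤ Γ i j)
    (hM : ∀ (k : ℕ) (f : Fin k → Fin N), Function.Injective f →
      0 < (M.submatrix f f).det) :
    ∀ (k : ℕ) (f : Fin k → Fin N), Function.Injective f →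
      0 < (Γ.submatrix f f).det :=
  Matrix.IsPMatrix.of_le hM hΓZ hle

theorem P_matrix_of_Z_matrix_comparison {N : ℕ} (M Γ : Matrix (Fin N) (Fin N) ℝ)
    (hMZ : ∀ i j, i ≠ j → M i j ≤ 0) (hΓZ : ∀ i j, i ≠ j → Γ i j ≤ 0)
    (hdiag : ∀ i, Γ i i = M i i) (hle : ∀ i j, M i j ≤ Γ i j)
    (hM : ∀ (k : ℕ) (f : Fin k → Fin N), Function.Injective f →
      0 < (M.submatrix f f).det) :
    ∀ (k : ℕ) (f : Fin k → Fin N), Function.Injective f →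
      0 < (Γ.submatrix f f).det :=
  P_matrix_of_Z_matrix_comparison_general M Γ hΓZ hle hM
end
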